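/- arXiv:2511.16804 — 2 statements merged into one kernel-verified Lean document; each statement's English description precedes it below -/
import Mathlib

section
/- In the quotient ring Z[w,z]/(w²−2w, zw−2w, zⁿ), the element w generates a cyclic subgroup of order 2ⁿ, and as an abelian group the quotient ring is isomorphic to Zⁿ ⊕ Z/2ⁿ with Z-basis classes 1, z, …, z^{n−1} for the free part and w for the torsion. -/
open MvPolynomial Polynomial

set_option maxHeartbeats 1000000
set_option synthInstance.maxHeartbeats 200000

/-- `R(Pin(2))/(zⁿ) = ℤ[w,z]/(w²−2w, zw−2w, zⁿ)`, with `X 0 = w`, `X 1 = z`. -/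
noncomputable abbrev RPinMod (n : ℕ) : Type :=
  MvPolynomial (Fin 2) ℤ ⧸ Ideal.span
    {(X 0 ^ 2 - 2 * X 0 : MvPolynomial (Fin 2) ℤ),
     (X 1 * X 0 - 2 * X 0 : MvPolynomial (Fin 2) ℤ),
     (X 1 ^ n : MvPolynomial (Fin 2) ℤ)}

namespace RPinAux

variable (n : ℕ)

noncomputable abbrev Iid : Ideal (MvPolynomial (Fin 2) ℤ) :=
  Ideal.span
    {(X 0 ^ 2 - 2 * X 0 : MvPolynomial (Fin 2) ℤ),
     (X 1 * X 0 - 2 * X 0 : MvPolynomial (Fin 2) ℤ),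
     (X 1 ^ n : MvPolynomial (Fin 2) ℤ)}

noncomputable abbrev Wv : RPinMod n := Ideal.Quotient.mk (Iid n) (X 0)
noncomputable abbrev Zv : RPinMod n := Ideal.Quotient.mk (Iid n) (X 1)

lemma relW : Wv n ^ 2 = 2 * Wv n := by
  have h : (X 0 ^ 2 - 2 * X 0 : MvPolynomial (Fin 2) ℤ) ∈ Iid n :=
    Ideal.subset_span (by simp)
  have h2 := Ideal.Quotient.eq_zero_iff_mem.mpr h
  rw [map_sub, sub_eq_zero] at h2
  rw [map_pow, map_mul, map_ofNat] at h2
  exact h2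

lemma relZW : Zv n * Wv n = 2 * Wv n := by
  have h : (X 1 * X 0 - 2 * X 0 : MvPolynomial (Fin 2) ℤ) ∈ Iid n :=
    Ideal.subset_span (by simp)
  have h2 := Ideal.Quotient.eq_zero_iff_mem.mpr h
  rw [map_sub, sub_eq_zero] at h2
  rw [map_mul, map_mul, map_ofNat] at h2
  exact h2

lemma relZn : Zv n ^ n = 0 := by
  have h : (X 1 ^ n : MvPolynomial (Fin 2) ℤ) ∈ Iid n :=
    Ideal.subset_span (by simp)
  have h2 := Ideal.Quotient.eq_zero_iff_mem.mpr h
  rw [map_pow] at h2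
  exact h2

lemma powZW (k : ℕ) : Zv n ^ k * Wv n = 2 ^ k * Wv n := by
  induction k with
  | zero => simp
  | succ k ih =>
    have : Zv n ^ (k+1) * Wv n = Zv n ^ k * (Zv n * Wv n) := by ring
    rw [this, relZW, ← mul_assoc, mul_comm (Zv n ^ k) 2, mul_assoc, ih]
    ring

lemma powW (k : ℕ) : Wv n ^ (k + 1) = 2 ^ k * Wv n := by
  induction k with
  | zero => simp
  | succ k ih =>
    have : Wv n ^ (k+2) = Wv n ^ (k+1) * Wv n := by ring
    rw [this, ih, mul_assoc, ← pow_two, relW]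
    ring

lemma two_pow_W : (2 ^ n : RPinMod n) * Wv n = 0 := by
  rw [← powZW, relZn, zero_mul]

lemma smul_W {c d : ℤ} (h : (2 ^ n : ℤ) ∣ c - d) : c • Wv n = d • Wv n := by
  obtain ⟨k, hk⟩ := h
  have h0 : c • Wv n - d • Wv n = 0 := by
    rw [← sub_smul, hk, zsmul_eq_mul]
    calc ((2 ^ n * k : ℤ) : RPinMod n) * Wv n
        = (k : RPinMod n) * ((2 ^ n : RPinMod n) * Wv n) := by push_cast; ring
      _ = 0 := by rw [two_pow_W, mul_zero]
  linear_combination (norm := abel) h0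


noncomputable abbrev q1 : Polynomial ℤ := Polynomial.X ^ n

lemma monic1 : (q1 n).Monic := monic_X_pow n

noncomputable abbrev A1 : Type := AdjoinRoot (q1 n)

lemma root1_pow : AdjoinRoot.root (q1 n) ^ n = 0 := by
  rw [← AdjoinRoot.mk_X, ← map_pow]
  exact AdjoinRoot.mk_self

noncomputable def aev1 : MvPolynomial (Fin 2) ℤ →+* A1 n :=
  (MvPolynomial.aeval ![0, AdjoinRoot.root (q1 n)]).toRingHom

lemma aev1_ker : Iid n ≤ RingHom.ker (aev1 n) := by
  rw [Ideal.span_le]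
  rintro g hg
  simp only [Set.mem_insert_iff, Set.mem_singleton_iff] at hg
  rcases hg with rfl | rfl | rfl <;>
    simp [aev1, RingHom.mem_ker, root1_pow]

noncomputable def phi1 : RPinMod n →+* A1 n :=
  Ideal.Quotient.lift (Iid n) (aev1 n) (fun _ ha => aev1_ker n ha)

@[simp] lemma phi1_mk (f : MvPolynomial (Fin 2) ℤ) :
    phi1 n (Ideal.Quotient.mk (Iid n) f) = aev1 n f :=
  Ideal.Quotient.lift_mk _ _ _

noncomputable abbrev q2 : Polynomial (ZMod (2 ^ n)) := Polynomial.X ^ 2 - Polynomial.C 2 * Polynomial.X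

lemma monic2 : (q2 n).Monic := by
  have h : (Polynomial.C (2 : ZMod (2 ^ n)) * Polynomial.X).degree < ↑2 := by
    apply lt_of_le_of_lt (by simpa using degree_C_mul_X_pow_le 1 (2 : ZMod (2 ^ n)))
    decide
  exact monic_X_pow_sub h

noncomputable abbrev A2 : Type := AdjoinRoot (q2 n)

lemma root2_rel : AdjoinRoot.root (q2 n) ^ 2 - 2 * AdjoinRoot.root (q2 n) = 0 := by
  have h := AdjoinRoot.aeval_eq (f := q2 n) (q2 n)
  rw [AdjoinRoot.mk_self] at h
  simp only [map_sub, map_pow, map_mul, Polynomial.aeval_X, Polynomial.aeval_C] at h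
  have h2 : (algebraMap (ZMod (2 ^ n)) (AdjoinRoot (q2 n))) 2 = 2 := map_ofNat _ 2
  rw [h2] at h
  exact h

lemma two_pow_A2 : (2 : A2 n) ^ n = 0 := by
  have h2 : ((2 : ZMod (2 ^ n))) ^ n = 0 := by
    have : ((2 : ZMod (2 ^ n))) ^ n = ((2 ^ n : ℕ) : ZMod (2 ^ n)) := by push_cast; ring
    rw [this, ZMod.natCast_self]
  calc (2 : A2 n) ^ n = (AdjoinRoot.of (q2 n)) ((2 : ZMod (2 ^ n)) ^ n) := by
        rw [map_pow, map_ofNat]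
    _ = 0 := by rw [h2, map_zero]

noncomputable def aev2 : MvPolynomial (Fin 2) ℤ →+* A2 n :=
  (MvPolynomial.aeval ![AdjoinRoot.root (q2 n), (2 : A2 n)]).toRingHom

lemma aev2_ker : Iid n ≤ RingHom.ker (aev2 n) := by
  rw [Ideal.span_le]
  rintro g hg
  simp only [Set.mem_insert_iff, Set.mem_singleton_iff] at hg
  rcases hg with rfl | rfl | rfl
  · simp only [RingHom.mem_ker, map_sub, map_pow, map_mul, map_ofNat, aev2,
      AlgHom.toRingHom_eq_coe, RingHom.coe_coe, MvPolynomial.aeval_X]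
    simpa using root2_rel n
  · simp only [RingHom.mem_ker, map_sub, map_mul, map_ofNat, aev2,
      AlgHom.toRingHom_eq_coe, RingHom.coe_coe, MvPolynomial.aeval_X]
    norm_num
  · simp only [RingHom.mem_ker, map_pow, aev2,
      AlgHom.toRingHom_eq_coe, RingHom.coe_coe, MvPolynomial.aeval_X]
    simpa using two_pow_A2 n

noncomputable def phi2 : RPinMod n →+* A2 n :=
  Ideal.Quotient.lift (Iid n) (aev2 n) (fun _ ha => aev2_ker n ha)

@[simp] lemma phi2_mk (f : MvPolynomial (Fin 2) ℤ) :
    phi2 n (Ideal.Quotient.mk (Iid n) f) = aev2 n f :=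
  Ideal.Quotient.lift_mk _ _ _


noncomputable def fHom : RPinMod n →+ (Fin n → ℤ) × ZMod (2 ^ n) where
  toFun x := (fun i => (AdjoinRoot.modByMonicHom (monic1 n) (phi1 n x)).coeff i,
              (AdjoinRoot.modByMonicHom (monic2 n) (phi2 n x)).coeff 1)
  map_zero' := by
    simp only [map_zero, Polynomial.coeff_zero]
    rfl
  map_add' x y := by
    simp only [map_add, Polynomial.coeff_add, Prod.mk_add_mk, Prod.mk.injEq]
    exact ⟨rfl, trivial⟩

noncomputable def gz (p : Fin n → ℤ) : RPinMod n :=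
  Ideal.Quotient.mk (Iid n) (∑ i : Fin n, MvPolynomial.C (p i) * MvPolynomial.X 1 ^ (i : ℕ))

noncomputable def g (p : Fin n → ℤ) (b : ZMod (2 ^ n)) : RPinMod n :=
  gz n p + (b.val : ℤ) • Wv n

lemma phi1_W : phi1 n (Wv n) = 0 := by
  rw [phi1_mk]
  simp [aev1]

lemma phi2_W : phi2 n (Wv n) = AdjoinRoot.root (q2 n) := by
  rw [phi2_mk]
  simp [aev2]

lemma phi1_gz (p : Fin n → ℤ) :
    phi1 n (gz n p) =
      AdjoinRoot.mk (q1 n) (∑ i : Fin n, Polynomial.C (p i) * Polynomial.X ^ (i : ℕ)) := by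
  rw [gz, phi1_mk]
  simp only [aev1, AlgHom.toRingHom_eq_coe, RingHom.coe_coe, map_sum, map_mul, map_pow,
    MvPolynomial.aeval_X, MvPolynomial.aeval_C, AdjoinRoot.mk_C, AdjoinRoot.mk_X,
    algebraMap_int_eq, eq_intCast, Matrix.cons_val_one, Matrix.head_cons]
  simp [AdjoinRoot.of]

lemma phi2_gz (p : Fin n → ℤ) :
    phi2 n (gz n p) =
      AdjoinRoot.of (q2 n) (∑ i : Fin n, (p i : ZMod (2 ^ n)) * 2 ^ (i : ℕ)) := by
  rw [gz, phi2_mk]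
  simp only [aev2, AlgHom.toRingHom_eq_coe, RingHom.coe_coe, map_sum, map_mul, map_pow,
    MvPolynomial.aeval_X, MvPolynomial.aeval_C, map_intCast, map_ofNat,
    Matrix.cons_val_one, Matrix.head_cons, algebraMap_int_eq, eq_intCast, Matrix.cons_val_zero]

lemma sum_mod (p : Fin n → ℤ) :
    (∑ i : Fin n, Polynomial.C (p i) * Polynomial.X ^ (i : ℕ)) %ₘ q1 n =
      ∑ i : Fin n, Polynomial.C (p i) * Polynomial.X ^ (i : ℕ) := by
  rw [Polynomial.modByMonic_eq_self_iff (monic1 n), degree_X_pow]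
  apply lt_of_le_of_lt (degree_sum_le _ _)
  rw [Finset.sup_lt_iff (by exact_mod_cast WithBot.bot_lt_coe n)]
  intro i _
  exact lt_of_le_of_lt (degree_C_mul_X_pow_le _ _) (by exact_mod_cast i.isLt)

lemma sum_coeff (p : Fin n → ℤ) (j : Fin n) :
    (∑ i : Fin n, Polynomial.C (p i) * Polynomial.X ^ (i : ℕ)).coeff (j : ℕ) = p j := by
  rw [Polynomial.finset_sum_coeff]
  rw [Finset.sum_eq_single j]
  · simp [Polynomial.coeff_C_mul, Polynomial.coeff_X_pow]
  · intro i _ hij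
    simp [Polynomial.coeff_C_mul, Polynomial.coeff_X_pow, Fin.val_eq_val, Ne.symm hij]
  · simp

lemma f_g (hn : 0 < n) (p : Fin n → ℤ) (b : ZMod (2 ^ n)) : fHom n (g n p b) = (p, b) := by
  haveI : NeZero (2 ^ n) := ⟨pow_ne_zero n (by norm_num)⟩
  haveI : Nontrivial (ZMod (2 ^ n)) :=
    ZMod.nontrivial_iff.mpr (Nat.ne_of_gt (Nat.one_lt_two_pow (by omega)))
  have hphi1 : phi1 n (g n p b) =
      AdjoinRoot.mk (q1 n) (∑ i : Fin n, Polynomial.C (p i) * Polynomial.X ^ (i : ℕ)) := by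
    rw [g, map_add, zsmul_eq_mul, map_mul, map_intCast, phi1_W, mul_zero, add_zero, phi1_gz]
  have hphi2 : phi2 n (g n p b) =
      AdjoinRoot.mk (q2 n)
        (Polynomial.C (∑ i : Fin n, (p i : ZMod (2 ^ n)) * 2 ^ (i : ℕ)) +
          Polynomial.C (((b.val : ℤ) : ZMod (2 ^ n))) * Polynomial.X) := by
    rw [g, map_add, zsmul_eq_mul, map_mul, map_intCast, phi2_W, phi2_gz, map_add, map_mul,
      AdjoinRoot.mk_C, AdjoinRoot.mk_C, AdjoinRoot.mk_X, map_intCast]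
  have hdeg : (q2 n).degree = 2 := by
    have h1 : (Polynomial.C (2 : ZMod (2 ^ n)) * Polynomial.X).degree <
        (Polynomial.X ^ 2 : Polynomial (ZMod (2 ^ n))).degree := by
      rw [degree_X_pow]
      apply lt_of_le_of_lt (by simpa using degree_C_mul_X_pow_le 1 (2 : ZMod (2 ^ n)))
      decide
    rw [q2, degree_sub_eq_left_of_degree_lt h1, degree_X_pow]
    rfl
  have hmod2 : (Polynomial.C (∑ i : Fin n, (p i : ZMod (2 ^ n)) * 2 ^ (i : ℕ)) +
          Polynomial.C (((b.val : ℤ) : ZMod (2 ^ n))) * Polynomial.X) %ₘ q2 n =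
      Polynomial.C (∑ i : Fin n, (p i : ZMod (2 ^ n)) * 2 ^ (i : ℕ)) +
          Polynomial.C (((b.val : ℤ) : ZMod (2 ^ n))) * Polynomial.X := by
    rw [Polynomial.modByMonic_eq_self_iff (monic2 n), hdeg]
    apply lt_of_le_of_lt (degree_add_le _ _)
    apply max_lt
    · exact lt_of_le_of_lt degree_C_le (by decide)
    · apply lt_of_le_of_lt (by simpa using degree_C_mul_X_pow_le 1 (((b.val : ℤ) : ZMod (2 ^ n))))
      decide
  have hval : (((b.val : ℤ) : ZMod (2 ^ n))) = b := by
    push_cast [ZMod.natCast_val, ZMod.cast_id]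
    rfl
  have e1 : (fHom n (g n p b)).1 = p := by
    funext j
    show (AdjoinRoot.modByMonicHom (monic1 n) (phi1 n (g n p b))).coeff (j : ℕ) = p j
    rw [hphi1, AdjoinRoot.modByMonicHom_mk, sum_mod, sum_coeff]
  have e2 : (fHom n (g n p b)).2 = b := by
    show (AdjoinRoot.modByMonicHom (monic2 n) (phi2 n (g n p b))).coeff 1 = b
    rw [hphi2, AdjoinRoot.modByMonicHom_mk, hmod2, Polynomial.coeff_add, Polynomial.coeff_C,
      Polynomial.coeff_C_mul, Polynomial.coeff_X]
    simpa using hval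
  calc fHom n (g n p b) = ((fHom n (g n p b)).1, (fHom n (g n p b)).2) := rfl
    _ = (p, b) := by rw [e1, e2]


lemma mkC (a : ℤ) : Ideal.Quotient.mk (Iid n) (MvPolynomial.C a) = (a : RPinMod n) := by
  have h : (MvPolynomial.C a : MvPolynomial (Fin 2) ℤ) = ((a : ℤ) : MvPolynomial (Fin 2) ℤ) := by
    simp
  rw [h, map_intCast]

lemma gz_zero : gz n 0 = 0 := by
  rw [gz]
  simp

lemma gz_add (p q : Fin n → ℤ) : gz n (p + q) = gz n p + gz n q := by
  rw [gz, gz, gz, ← map_add, ← Finset.sum_add_distrib]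
  congr 1
  apply Finset.sum_congr rfl
  intro i _
  simp [add_mul]

lemma g_add (p q : Fin n → ℤ) (b c : ZMod (2 ^ n)) :
    g n p b + g n q c = g n (p + q) (b + c) := by
  haveI : NeZero (2 ^ n) := ⟨pow_ne_zero n (by norm_num)⟩
  rw [g, g, g, gz_add]
  have h : ((b.val : ℤ)) • Wv n + ((c.val : ℤ)) • Wv n = (((b + c).val : ℤ)) • Wv n := by
    rw [← add_smul, ← Nat.cast_add]
    apply smul_W
    set d : ℤ := ((b.val + c.val : ℕ) : ℤ) - (((b + c).val : ℕ) : ℤ) with hd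
    have h0 : ((d : ℤ) : ZMod (2 ^ n)) = 0 := by
      rw [hd]
      push_cast [ZMod.natCast_val, ZMod.cast_id]
      ring
    have := (ZMod.intCast_zmod_eq_zero_iff_dvd d (2 ^ n)).mp h0
    exact_mod_cast this
  rw [← h]
  abel

lemma int_smul_W (c : ℤ) : c • Wv n = g n 0 ((c : ZMod (2 ^ n))) := by
  haveI : NeZero (2 ^ n) := ⟨pow_ne_zero n (by norm_num)⟩
  rw [g, gz_zero, zero_add]
  apply smul_W
  set d : ℤ := c - (((c : ZMod (2 ^ n)).val : ℕ) : ℤ) with hd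
  have h0 : ((d : ℤ) : ZMod (2 ^ n)) = 0 := by
    rw [hd]
    push_cast [ZMod.natCast_val, ZMod.cast_id]
    ring
  have := (ZMod.intCast_zmod_eq_zero_iff_dvd d (2 ^ n)).mp h0
  exact_mod_cast this

lemma g_single (i : Fin n) (a : ℤ) :
    g n (Pi.single i a) 0 =
      Ideal.Quotient.mk (Iid n) (MvPolynomial.C a * MvPolynomial.X 1 ^ (i : ℕ)) := by
  haveI : NeZero (2 ^ n) := ⟨pow_ne_zero n (by norm_num)⟩
  rw [g, ZMod.val_zero]
  simp only [Nat.cast_zero, zero_smul, add_zero]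
  rw [gz, Finset.sum_eq_single i]
  · rw [Pi.single_eq_same]
  · intro j _ hji
    rw [Pi.single_eq_of_ne hji]
    simp
  · simp

lemma monomial_expand (u : Fin 2 →₀ ℕ) (a : ℤ) :
    (MvPolynomial.monomial u a : MvPolynomial (Fin 2) ℤ) =
      MvPolynomial.C a * MvPolynomial.X 0 ^ (u 0) * MvPolynomial.X 1 ^ (u 1) := by
  rw [MvPolynomial.monomial_eq, Finsupp.prod_fintype _ _ (fun i => pow_zero _),
    Fin.prod_univ_two, mul_assoc]

lemma Zpow_big {k : ℕ} (hk : n ≤ k) : Zv n ^ k = 0 := by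
  have h : k = n + (k - n) := by omega
  rw [h, pow_add, relZn, zero_mul]

lemma exists_g (hn : 0 < n) (x : RPinMod n) : ∃ p b, g n p b = x := by
  obtain ⟨f, rfl⟩ := Ideal.Quotient.mk_surjective x
  induction f using MvPolynomial.induction_on' with
  | add f₁ f₂ hf₁ hf₂ =>
    obtain ⟨p, b, hb⟩ := hf₁
    obtain ⟨q, c, hc⟩ := hf₂
    exact ⟨p + q, b + c, by rw [← g_add, hb, hc, map_add]⟩
  | monomial u a =>
    cases h0 : u 0 with
    | zero =>
      by_cases h1 : u 1 < n
      · refine ⟨Pi.single ⟨u 1, h1⟩ a, 0, ?_⟩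
        rw [g_single, monomial_expand, h0, pow_zero, mul_one]
      · refine ⟨0, 0, ?_⟩
        have hz : Ideal.Quotient.mk (Iid n) ((MvPolynomial.monomial u) a) =
            (a : RPinMod n) * Zv n ^ (u 1) := by
          rw [monomial_expand, h0, pow_zero, mul_one, map_mul, map_pow, mkC]
        rw [hz, Zpow_big n (by omega), mul_zero]
        rw [show (0 : ZMod (2 ^ n)) = ((0 : ℤ) : ZMod (2 ^ n)) by norm_num, ← int_smul_W]
        simp
    | succ k =>
      refine ⟨0, ((a * 2 ^ (k + u 1) : ℤ) : ZMod (2 ^ n)), ?_⟩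
      rw [← int_smul_W]
      symm
      have hz : Ideal.Quotient.mk (Iid n) ((MvPolynomial.monomial u) a) =
          (a : RPinMod n) * (Wv n ^ (k + 1) * Zv n ^ (u 1)) := by
        rw [monomial_expand, h0, map_mul, map_mul, map_pow, map_pow, mkC]
        ring
      rw [hz, powW]
      calc (a : RPinMod n) * (2 ^ k * Wv n * Zv n ^ (u 1))
          = (a : RPinMod n) * (2 ^ k * (Zv n ^ (u 1) * Wv n)) := by ring
        _ = (a : RPinMod n) * (2 ^ k * (2 ^ (u 1) * Wv n)) := by rw [powZW]
        _ = ((a * 2 ^ (k + u 1) : ℤ) : RPinMod n) * Wv n := by push_cast; ring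
        _ = (a * 2 ^ (k + u 1) : ℤ) • Wv n := (zsmul_eq_mul _ _).symm

lemma f_bij (hn : 0 < n) : Function.Bijective (fHom n) := by
  constructor
  · intro x y hxy
    obtain ⟨p, b, rfl⟩ := exists_g n hn x
    obtain ⟨q, c, rfl⟩ := exists_g n hn y
    rw [f_g n hn, f_g n hn] at hxy
    obtain ⟨h1, h2⟩ := Prod.mk.injEq _ _ _ _ ▸ hxy
    · rw [h1, h2]
  · rintro ⟨p, b⟩
    exact ⟨g n p b, f_g n hn p b⟩

lemma g_one_W (hn : 0 < n) : g n 0 1 = Wv n := by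
  haveI : Fact (1 < 2 ^ n) := ⟨Nat.one_lt_two_pow (by omega)⟩
  rw [g, gz_zero, zero_add, ZMod.val_one]
  simp

end RPinAux


/-- In `ℤ[w,z]/(w²−2w, zw−2w, zⁿ)` (for `n ≥ 1`), the element `w`
generates a cyclic subgroup of order `2ⁿ`, and as an abelian group the quotient ring is
`ℤⁿ ⊕ ℤ/2ⁿ`, with the classes `1, z, …, z^{n−1}` a basis of the free part and `w` the
generator of the torsion part. -/
theorem stmt_2 (n : ℕ) (hn : 0 < n) :
    addOrderOf ((Ideal.Quotient.mk _ (X 0) : RPinMod n)) = 2 ^ n ∧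
    ∃ e : RPinMod n ≃+ (Fin n → ℤ) × ZMod (2 ^ n),
      (∀ i : Fin n,
        e (Ideal.Quotient.mk _ ((X 1 : MvPolynomial (Fin 2) ℤ) ^ (i : ℕ))) =
          (Pi.single i 1, 0)) ∧
      e (Ideal.Quotient.mk _ (X 0)) = (0, 1) := by
  haveI : NeZero (2 ^ n) := ⟨pow_ne_zero n (by norm_num)⟩
  set e := AddEquiv.ofBijective (RPinAux.fHom n) (RPinAux.f_bij n hn) with he
  have happ : ∀ x, e x = RPinAux.fHom n x := fun x => rfl
  have hW : (Ideal.Quotient.mk _ (X 0) : RPinMod n) = RPinAux.Wv n := rfl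
  have heW : e (RPinAux.Wv n) = (0, 1) := by
    rw [show RPinAux.Wv n = RPinAux.g n 0 1 from (RPinAux.g_one_W n hn).symm, happ]
    exact RPinAux.f_g n hn 0 1
  refine ⟨?_, e, ?_, ?_⟩
  · rw [hW]
    have h1 := addOrderOf_injective e.toAddMonoidHom e.injective (RPinAux.Wv n)
    rw [← h1, show e.toAddMonoidHom (RPinAux.Wv n) = e (RPinAux.Wv n) from rfl, heW,
      Prod.addOrderOf]
    simp [ZMod.addOrderOf_one]
  · intro i
    have h2 : (Ideal.Quotient.mk _ ((X 1 : MvPolynomial (Fin 2) ℤ) ^ (i : ℕ)) : RPinMod n) =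
        RPinAux.g n (Pi.single i 1) 0 := by
      rw [RPinAux.g_single]
      congr 1
      simp
    rw [h2, happ]
    exact RPinAux.f_g n hn _ _
  · rw [hW, ← RPinAux.g_one_W n hn, happ]
    exact RPinAux.f_g n hn 0 1
end

section
/- If an abelian group G fits in a short exact sequence 0 → Z ⊕ Z/4 → G → Z ⊕ Z/2 → 0 in which some lift x ∈ G of the generator of the Z/2 summand satisfies 2x = (0, t) where t generates the Z/4 summand, then the torsion subgroup of G is cyclic of order 8. -/
/-- If an abelian group `G` fits in a short exact sequence
`0 → ℤ ⊕ ℤ/4 → G → ℤ ⊕ ℤ/2 → 0` in which some lift `x ∈ G` of the generator of the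
`ℤ/2` summand satisfies `2x = i (0, t)` where `t` generates the `ℤ/4` summand, then the
torsion subgroup of `G` is cyclic of order 8. -/
theorem stmt_6 (G : Type) [AddCommGroup G]
    (i : ℤ × ZMod 4 →+ G) (p : G →+ ℤ × ZMod 2)
    (hi : Function.Injective i) (hp : Function.Surjective p)
    (hexact : i.range = p.ker)
    (x : G) (t : ZMod 4)
    (hx : p x = (0, 1)) (ht : addOrderOf t = 4)
    (h2x : 2 • x = i (0, t)) :
    Nonempty ((AddCommGroup.torsion G) ≃+ ZMod 8) := by
  have hi0 : ∀ y : ℤ × ZMod 4, i y = 0 → y = 0 :=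
    fun y hy => hi (by simpa using hy)
  -- basic facts about t
  have h4t : (4 : ℕ) • t = 0 := by
    have := addOrderOf_nsmul_eq_zero t
    rwa [ht] at this
  have h2t : (2 : ℕ) • t ≠ 0 := by
    intro h
    have := addOrderOf_dvd_of_nsmul_eq_zero h
    rw [ht] at this
    omega
  -- x has order 8
  have h8x : (8 : ℕ) • x = 0 := by
    have : (8 : ℕ) • x = i ((4 : ℕ) • ((0 : ℤ), t)) := by
      rw [map_nsmul, ← h2x, ← mul_nsmul]
    rw [this, Prod.smul_mk, smul_zero, h4t]
    exact map_zero i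
  have h4x : (4 : ℕ) • x ≠ 0 := by
    intro h
    have : (4 : ℕ) • x = i ((2 : ℕ) • ((0 : ℤ), t)) := by
      rw [map_nsmul, ← h2x, ← mul_nsmul]
    rw [this] at h
    have := hi0 _ h
    apply h2t
    have := congrArg Prod.snd this
    simpa using this
  have hordx : addOrderOf x = 8 := by
    have : addOrderOf x = 2 ^ 3 := by
      refine addOrderOf_eq_prime_pow ?_ ?_
      · simpa using h4x
      · simpa using h8x
    simpa using this
  -- x is torsion
  have hxtor : x ∈ AddCommGroup.torsion G := by
    refine isOfFinAddOrder_iff_nsmul_eq_zero.mpr ⟨8, by norm_num, h8x⟩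
  -- t generates ZMod 4
  have htgen : ∀ s : ZMod 4, ∃ k : ℤ, s = k • t := by
    intro s
    have hcard : Nat.card (AddSubgroup.zmultiples t) = Nat.card (ZMod 4) := by
      rw [Nat.card_zmultiples, ht]; simp [Nat.card_eq_fintype_card]
    have htop : AddSubgroup.zmultiples t = ⊤ :=
      AddSubgroup.eq_top_of_card_eq _ hcard
    have : s ∈ AddSubgroup.zmultiples t := htop ▸ AddSubgroup.mem_top s
    obtain ⟨k, hk⟩ := AddSubgroup.mem_zmultiples_iff.mp this
    exact ⟨k, hk.symm⟩
  -- key: every torsion element is a multiple of x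
  have key : ∀ g : G, IsOfFinAddOrder g → ∃ m : ℤ, g = m • x := by
    intro g hg
    obtain ⟨n, hn, hng⟩ := isOfFinAddOrder_iff_nsmul_eq_zero.mp hg
    -- first coordinate of p g is 0
    have hpg1 : (p g).1 = 0 := by
      have : (n : ℤ) * (p g).1 = 0 := by
        have : (n : ℕ) • p g = 0 := by rw [← map_nsmul, hng, map_zero]
        have := congrArg Prod.fst this
        simpa [nsmul_eq_mul] using this
      rcases mul_eq_zero.mp this with h | h
      · exfalso; exact_mod_cast (by omega : (n : ℤ) ≠ 0) h
      · exact h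
    -- second coordinate is 0 or 1
    have hb : (p g).2 = 0 ∨ (p g).2 = 1 := by
      have : ∀ b : ZMod 2, b = 0 ∨ b = 1 := by decide
      exact this _
    -- in either case, g - c • x ∈ ker p for c = 0 or 1
    have main : ∀ c : ℤ, p (g - c • x) = 0 → ∃ m : ℤ, g = m • x := by
      intro c hc
      have : g - c • x ∈ p.ker := hc
      rw [← hexact] at this
      obtain ⟨⟨a, s⟩, has⟩ := this
      -- a = 0 since g - c • x is torsion
      have htor' : g - c • x ∈ AddCommGroup.torsion G :=
        sub_mem hg (AddSubgroup.zsmul_mem _ hxtor c)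
      obtain ⟨N, hN, hNg⟩ :=
        isOfFinAddOrder_iff_nsmul_eq_zero.mp htor'
      have ha : a = 0 := by
        have : i (N • (a, s)) = 0 := by rw [map_nsmul, has, hNg]
        have := hi0 _ this
        have := congrArg Prod.fst this
        simp only [Prod.smul_fst, Prod.fst_zero, nsmul_eq_mul] at this
        rcases mul_eq_zero.mp this with h | h
        · exfalso; exact_mod_cast (by omega : (N : ℤ) ≠ 0) h
        · exact h
      obtain ⟨k, hk⟩ := htgen s
      have hgx : g - c • x = (k * 2) • x := by
        rw [← has, ha, hk]
        have h1 : ((0 : ℤ), k • t) = k • ((0 : ℤ), t) := by simp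
        rw [h1, map_zsmul, ← h2x]
        have h2 : (2 : ℕ) • x = (2 : ℤ) • x := by exact_mod_cast (natCast_zsmul x 2).symm
        rw [h2, smul_smul]
      refine ⟨k * 2 + c, ?_⟩
      rw [add_smul, ← hgx]
      abel
    rcases hb with h | h
    · refine main 0 ?_
      simp only [zero_smul, sub_zero]
      exact Prod.ext hpg1 h
    · refine main 1 ?_
      rw [map_sub, one_smul, hx]
      refine Prod.ext ?_ ?_
      · simpa using hpg1
      · simp [h]
  -- build the equivalence
  set xT : AddCommGroup.torsion G := ⟨x, hxtor⟩ with hxT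
  have h8xT : (zmultiplesHom _ xT) (8 : ℤ) = 0 := by
    apply Subtype.ext
    have : ((8 : ℤ) • xT : AddCommGroup.torsion G).1 = (8 : ℤ) • x := rfl
    simpa [zmultiplesHom_apply, this] using (by exact_mod_cast h8x : (8 : ℤ) • x = 0)
  let f : ZMod 8 →+ AddCommGroup.torsion G := ZMod.lift 8 ⟨zmultiplesHom _ xT, h8xT⟩
  have hf_int : ∀ m : ℤ, f (m : ZMod 8) = m • xT := fun m => by
    show ZMod.lift 8 ⟨zmultiplesHom _ xT, h8xT⟩ (m : ZMod 8) = m • xT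
    rw [ZMod.lift_coe]
    rfl
  have hinj : Function.Injective f := by
    rw [injective_iff_map_eq_zero]
    intro c hc
    have hc' : c = ((c.val : ℤ) : ZMod 8) := by simp [ZMod.intCast_cast]
    rw [hc'] at hc
    rw [hf_int] at hc
    have : (c.val : ℤ) • x = 0 := congrArg Subtype.val hc
    have hdvd : (8 : ℤ) ∣ (c.val : ℤ) := by
      have h := (addOrderOf_dvd_iff_zsmul_eq_zero).mpr this
      rwa [hordx] at h
    have : (8 : ℕ) ∣ c.val := by exact_mod_cast hdvd
    have hlt : c.val < 8 := c.val_lt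
    have : c.val = 0 := by omega
    rw [hc', this]; simp
  have hsurj : Function.Surjective f := by
    rintro ⟨g, hg⟩
    obtain ⟨m, hm⟩ := key g hg
    refine ⟨(m : ZMod 8), ?_⟩
    rw [hf_int]
    exact Subtype.ext (by simpa using hm.symm)
  exact ⟨(AddEquiv.ofBijective f ⟨hinj, hsurj⟩).symm⟩
end
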